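/- arXiv:1603.06237 — 6 statements merged into one kernel-verified Lean document; each statement's English description precedes it below -/
import Mathlib

section
/- Let d ≥ 1 be an integer, T > 0, and let r, ρ : [0,T] → ℝ be differentiable with r(t) > 0 for all t ∈ [0,T], satisfying r'(t) = 1 − 2ρ(t) and ρ'(t) = −((d−1)/r(t)) ρ(t)(1 − ρ(t)) with r(0) = r₀, ρ(0) = ρ₀. Then for all t ∈ [0,T], r(t)^{d−1} ρ(t)(1 − ρ(t)) = r₀^{d−1} ρ₀(1 − ρ₀). -/
open Set

/-- Along solutions of the characteristic system `r' = 1 − 2ρ`, `ρ' = −((d−1)/r) ρ(1−ρ)` of the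
zero-viscosity radial Hughes model, the quantity `r^{d−1} ρ(1−ρ)` is conserved. -/
theorem hughes_characteristics_conserved_quantity
    (d : ℕ) (hd : 1 ≤ d) (T : ℝ) (hT : 0 < T)
    (r ρ : ℝ → ℝ) (r₀ ρ₀ : ℝ) (hr0 : r 0 = r₀) (hρ0 : ρ 0 = ρ₀)
    (hrpos : ∀ t ∈ Set.Icc (0:ℝ) T, 0 < r t)
    (hr' : ∀ t ∈ Set.Icc (0:ℝ) T, HasDerivWithinAt r (1 - 2 * ρ t) (Set.Icc 0 T) t)
    (hρ' : ∀ t ∈ Set.Icc (0:ℝ) T,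
      HasDerivWithinAt ρ (-(((d : ℝ) - 1) / r t) * (ρ t * (1 - ρ t))) (Set.Icc 0 T) t) :
    ∀ t ∈ Set.Icc (0:ℝ) T,
      r t ^ (d - 1) * (ρ t * (1 - ρ t)) = r₀ ^ (d - 1) * (ρ₀ * (1 - ρ₀)) := by
  obtain ⟨m, rfl⟩ : ∃ m, d = m + 1 := ⟨d - 1, by omega⟩
  have hcast : ((m + 1 : ℕ) : ℝ) - 1 = (m : ℝ) := by push_cast; ring
  set F : ℝ → ℝ := fun t => r t ^ m * (ρ t * (1 - ρ t)) with hF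
  have key : ∀ t ∈ Set.Icc (0:ℝ) T, HasDerivWithinAt F 0 (Set.Icc 0 T) t := by
    intro t ht
    have hrne : r t ≠ 0 := (hrpos t ht).ne'
    have hρ'' : HasDerivWithinAt ρ (-((m : ℝ) / r t) * (ρ t * (1 - ρ t))) (Set.Icc 0 T) t := by
      have := hρ' t ht; rwa [hcast] at this
    have hg : HasDerivWithinAt (fun t => ρ t * (1 - ρ t))
        ((-((m : ℝ) / r t) * (ρ t * (1 - ρ t))) * (1 - ρ t) +
          ρ t * (0 - (-((m : ℝ) / r t) * (ρ t * (1 - ρ t))))) (Set.Icc 0 T) t :=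
      hρ''.mul ((hasDerivWithinAt_const t _ (1:ℝ)).sub hρ'')
    have hp : HasDerivWithinAt (fun t => r t ^ m)
        ((m : ℝ) * r t ^ (m - 1) * (1 - 2 * ρ t)) (Set.Icc 0 T) t := (hr' t ht).pow m
    have := hp.mul hg
    convert (show HasDerivWithinAt F _ (Set.Icc 0 T) t from this) using 1
    rcases Nat.eq_zero_or_pos m with hm | hm
    · subst hm; simp
    · obtain ⟨k, rfl⟩ : ∃ k, m = k + 1 := ⟨m - 1, by omega⟩
      simp only [Nat.add_sub_cancel, pow_succ]
      field_simp
      ring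
  intro t ht
  have hcont : ContinuousOn F (Set.Icc 0 T) := fun x hx => (key x hx).continuousWithinAt
  have hderiv : ∀ x ∈ Set.Ico (0:ℝ) T, HasDerivWithinAt F 0 (Set.Ici x) x := by
    intro x hx
    have hmem : Set.Icc (0:ℝ) T ∈ nhdsWithin x (Set.Ici x) :=
      Filter.mem_of_superset (Icc_mem_nhdsGE_of_mem ⟨le_refl x, hx.2⟩)
        (Set.Icc_subset_Icc hx.1 le_rfl)
    exact (key x (Set.Ico_subset_Icc_self hx)).mono_of_mem_nhdsWithin hmem
  have := constant_of_has_deriv_right_zero hcont hderiv t ht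
  simpa [hF, hr0, hρ0, Nat.add_sub_cancel] using this
end

section
/- Let d ≥ 1 be an integer, T > 0, and let r, ρ : [0,T] → ℝ be differentiable with r(t) > 0 for all t ∈ [0,T], satisfying r'(t) = 1 − 2ρ(t) and ρ'(t) = −((d−1)/r(t)) ρ(t)(1 − ρ(t)) with r(0) = r₀, ρ(0) = ρ₀. Then for all t ∈ [0,T], ρ'(t) = −((d−1)/r(t)) (r₀/r(t))^{d−1} ρ₀(1 − ρ₀). -/
open Set

/-- Along solutions of the characteristic system `r' = 1 − 2ρ`, `ρ' = −((d−1)/r) ρ(1−ρ)` of the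
zero-viscosity radial Hughes model, the density also satisfies the ODE
`ρ'(t) = −((d−1)/r(t)) (r₀/r(t))^{d−1} ρ₀(1−ρ₀)`. -/
theorem hughes_characteristics_density_ODE
    (d : ℕ) (hd : 1 ≤ d) (T : ℝ) (hT : 0 < T)
    (r ρ : ℝ → ℝ) (r₀ ρ₀ : ℝ) (hr0 : r 0 = r₀) (hρ0 : ρ 0 = ρ₀)
    (hrpos : ∀ t ∈ Set.Icc (0:ℝ) T, 0 < r t)
    (hr' : ∀ t ∈ Set.Icc (0:ℝ) T, HasDerivWithinAt r (1 - 2 * ρ t) (Set.Icc 0 T) t)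
    (hρ' : ∀ t ∈ Set.Icc (0:ℝ) T,
      HasDerivWithinAt ρ (-(((d : ℝ) - 1) / r t) * (ρ t * (1 - ρ t))) (Set.Icc 0 T) t) :
    ∀ t ∈ Set.Icc (0:ℝ) T,
      HasDerivWithinAt ρ
        (-(((d : ℝ) - 1) / r t) * ((r₀ / r t) ^ (d - 1) * (ρ₀ * (1 - ρ₀))))
        (Set.Icc 0 T) t := by
  set F : ℝ → ℝ := fun t => r t ^ (d - 1) * (ρ t * (1 - ρ t)) with hF
  -- F has derivative zero on Icc
  have hFderiv : ∀ t ∈ Set.Icc (0:ℝ) T, HasDerivWithinAt F 0 (Set.Icc 0 T) t := by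
    intro t ht
    have hrne : r t ≠ 0 := (hrpos t ht).ne'
    have h1 : HasDerivWithinAt (fun s => r s ^ (d - 1))
        (((d - 1 : ℕ) : ℝ) * r t ^ (d - 1 - 1) * (1 - 2 * ρ t)) (Set.Icc 0 T) t :=
      (hr' t ht).pow (d - 1)
    have h2 : HasDerivWithinAt (fun s => ρ s * (1 - ρ s))
        ((-(((d : ℝ) - 1) / r t) * (ρ t * (1 - ρ t))) * (1 - ρ t)
          + ρ t * (0 - (-(((d : ℝ) - 1) / r t) * (ρ t * (1 - ρ t)))))
        (Set.Icc 0 T) t :=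
      (hρ' t ht).mul ((hasDerivWithinAt_const t _ (1:ℝ)).sub (hρ' t ht))
    have h3 := h1.mul h2
    refine h3.congr_deriv ?_
    symm
    rcases Nat.lt_or_ge d 2 with hd2 | hd2
    · interval_cases d
      · norm_num
    · have hcast : ((d - 1 : ℕ) : ℝ) = (d : ℝ) - 1 := by
        have := Nat.cast_sub hd (R := ℝ); simpa using this
      have hpow : r t ^ (d - 1 - 1) * r t = r t ^ (d - 1) := by
        rw [← pow_succ]
        congr 1
        omega
      rw [hcast, ← hpow]
      field_simp
      ring
  -- F is constant
  have hconst : ∀ t ∈ Set.Icc (0:ℝ) T, F t = F 0 := by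
    apply constant_of_derivWithin_zero
    · intro t ht
      exact (hFderiv t ht).differentiableWithinAt
    · intro t ht
      have ht' : t ∈ Set.Icc (0:ℝ) T := Set.Ico_subset_Icc_self ht
      exact (hFderiv t ht').derivWithin ((uniqueDiffOn_Icc hT) t ht')
  intro t ht
  have hrne : r t ≠ 0 := (hrpos t ht).ne'
  have hpowne : r t ^ (d - 1) ≠ 0 := pow_ne_zero _ hrne
  have key : ρ t * (1 - ρ t) = (r₀ / r t) ^ (d - 1) * (ρ₀ * (1 - ρ₀)) := by
    have h := hconst t ht
    simp only [hF, hr0, hρ0] at h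
    rw [div_pow]
    field_simp
    linarith [h]
  have := hρ' t ht
  rwa [key] at this
end

section
/- Let d ≥ 1 be an integer, T > 0, and let r, ρ : [0,T] → ℝ be differentiable with r(t) > 0 for all t ∈ [0,T], satisfying r'(t) = 1 − 2ρ(t) and ρ'(t) = −((d−1)/r(t)) ρ(t)(1 − ρ(t)) with r(0) = r₀, ρ(0) = ρ₀, and set V₀ = ρ₀(1−ρ₀). If 0 ≤ ρ(t) ≤ 1/2 for all t ∈ [0,T], then r'(t) = √(1 − 4 V₀ (r₀/r(t))^{d−1}) for all t ∈ [0,T]; if instead 1/2 ≤ ρ(t) ≤ 1 for all t ∈ [0,T], then r'(t) = −√(1 − 4 V₀ (r₀/r(t))^{d−1}) for all t ∈ [0,T]. -/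
open Set

/-- Along solutions of the characteristic system `r' = 1 − 2ρ`, `ρ' = −((d−1)/r) ρ(1−ρ)` of the
zero-viscosity radial Hughes model with `V₀ = ρ₀(1−ρ₀)`: in regime 1 (`0 ≤ ρ ≤ 1/2`) one has
`r' = √(1 − 4V₀ (r₀/r)^{d−1})`, while in regime 2 (`1/2 ≤ ρ ≤ 1`) one has
`r' = −√(1 − 4V₀ (r₀/r)^{d−1})`. -/
theorem hughes_characteristics_radius_ODE_regimes
    (d : ℕ) (hd : 1 ≤ d) (T : ℝ) (hT : 0 < T)
    (r ρ : ℝ → ℝ) (r₀ ρ₀ V₀ : ℝ) (hr0 : r 0 = r₀) (hρ0 : ρ 0 = ρ₀)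
    (hV₀ : V₀ = ρ₀ * (1 - ρ₀))
    (hrpos : ∀ t ∈ Set.Icc (0:ℝ) T, 0 < r t)
    (hr' : ∀ t ∈ Set.Icc (0:ℝ) T, HasDerivWithinAt r (1 - 2 * ρ t) (Set.Icc 0 T) t)
    (hρ' : ∀ t ∈ Set.Icc (0:ℝ) T,
      HasDerivWithinAt ρ (-(((d : ℝ) - 1) / r t) * (ρ t * (1 - ρ t))) (Set.Icc 0 T) t) :
    ((∀ t ∈ Set.Icc (0:ℝ) T, 0 ≤ ρ t ∧ ρ t ≤ 1 / 2) →
      ∀ t ∈ Set.Icc (0:ℝ) T,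
        HasDerivWithinAt r (Real.sqrt (1 - 4 * V₀ * (r₀ / r t) ^ (d - 1)))
          (Set.Icc 0 T) t) ∧
    ((∀ t ∈ Set.Icc (0:ℝ) T, 1 / 2 ≤ ρ t ∧ ρ t ≤ 1) →
      ∀ t ∈ Set.Icc (0:ℝ) T,
        HasDerivWithinAt r (-Real.sqrt (1 - 4 * V₀ * (r₀ / r t) ^ (d - 1)))
          (Set.Icc 0 T) t) := by
  have hcast : ((d - 1 : ℕ) : ℝ) = (d : ℝ) - 1 := by
    rw [Nat.cast_sub hd]; norm_num
  set n := d - 1 with hn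
  set s := Set.Icc (0:ℝ) T with hs
  -- conservation law: E = ρ(1-ρ) r^n is constant
  have hEderiv : ∀ t ∈ s, HasDerivWithinAt (fun t => ρ t * (1 - ρ t) * r t ^ n) 0 s t := by
    intro t ht
    have h1 := hρ' t ht
    have h2 := hr' t ht
    have hrt := hrpos t ht
    have hD := (h1.mul ((hasDerivWithinAt_const t s (1:ℝ)).sub h1)).mul (h2.pow n)
    convert hD using 1
    · rfl
    · rfl
    · rfl
    rw [← hcast]
    rcases Nat.eq_zero_or_pos n with h0 | hpos
    · simp [h0]
    · have hrn : r t ^ n = r t ^ (n - 1) * r t := by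
        rw [← pow_succ, Nat.sub_add_cancel hpos]
      rw [Pi.pow_apply, Pi.mul_apply, Pi.sub_apply, hrn]
      field_simp
      ring
  have hconst : ∀ t ∈ s, ρ t * (1 - ρ t) * r t ^ n = V₀ * r₀ ^ n := by
    intro t ht
    have := constant_of_derivWithin_zero (f := fun t => ρ t * (1 - ρ t) * r t ^ n)
      (a := 0) (b := T)
      (fun x hx => ((hEderiv x hx).differentiableWithinAt))
      (fun x hx => (hEderiv x (Set.Ico_subset_Icc_self hx)).derivWithin
        (uniqueDiffOn_Icc hT x (Set.Ico_subset_Icc_self hx))) t ht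
    simpa [hρ0, hr0, hV₀] using this
  have key : ∀ t ∈ s, 1 - 4 * V₀ * (r₀ / r t) ^ n = (1 - 2 * ρ t) ^ 2 := by
    intro t ht
    have hrt := hrpos t ht
    have hE := hconst t ht
    have hrn : (0:ℝ) < r t ^ n := pow_pos hrt n
    rw [div_pow]
    field_simp
    linear_combination (4:ℝ) * hE
  constructor
  · intro hreg t ht
    have h2 := hr' t ht
    have hρt := hreg t ht
    have : Real.sqrt (1 - 4 * V₀ * (r₀ / r t) ^ n) = 1 - 2 * ρ t := by
      rw [key t ht, Real.sqrt_sq (by linarith [hρt.2])]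
    rwa [this]
  · intro hreg t ht
    have h2 := hr' t ht
    have hρt := hreg t ht
    have : -Real.sqrt (1 - 4 * V₀ * (r₀ / r t) ^ n) = 1 - 2 * ρ t := by
      rw [key t ht, Real.sqrt_sq_eq_abs, abs_of_nonpos (by linarith [hρt.1])]
      ring
    rwa [this]
end

section
/- Let r₀ > 0, 0 < ρ₀ < 1/2, V₀ = ρ₀(1−ρ₀), and T > 0. Let r : [0,T] → ℝ be differentiable with r(0) = r₀, r(t) ≥ r₀ for all t, and r'(t) = √(1 − 4 r₀ V₀ / r(t)) for all t ∈ [0,T]. Then for all t ∈ [0,T]: 2 r₀ V₀ log[2 r(t) (1 + √(1 − 4 r₀ V₀ / r(t))) − 4 r₀ V₀] + r(t) √(1 − 4 r₀ V₀ / r(t)) = t + r₀ [2 V₀ log(4 r₀ (1−ρ₀)²) + 1 − 2ρ₀]. -/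
open Set

lemma hughes_key (p q x s : ℝ) (hq : 0 < q) (hx : 0 < x) (hs : 0 < s)
    (hs2 : x * s ^ 2 = x - q) (hpq : 2 * p = q) (harg : 0 < 2 * x * (1 + s) - q) :
    1 / s = p * ((2 * (1 + s) + 2 * x * (q / x ^ 2 / (2 * s))) / (2 * x * (1 + s) - q))
      + (1 * s + x * (q / x ^ 2 / (2 * s))) := by
  subst hpq
  have h1 : s ≠ 0 := hs.ne'
  have h2 : x ≠ 0 := hx.ne'
  have h3 : 2 * x * (1 + s) - 2 * p ≠ 0 := harg.ne'
  have h4 : (1 + s) * x - p ≠ 0 := by intro h; apply h3; linear_combination 2 * h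
  field_simp
  linear_combination (-(1+s)*x) * hs2

lemma hughes_aux_deriv (p q x : ℝ) (hq : 0 < q) (hqx : q < x) (hpq : 2 * p = q) :
    HasDerivAt (fun y => p * Real.log (2 * y * (1 + Real.sqrt (1 - q / y)) - q)
        + y * Real.sqrt (1 - q / y))
      (1 / Real.sqrt (1 - q / x)) x := by
  have hx : 0 < x := hq.trans hqx
  have hu : 0 < 1 - q / x := by
    rw [sub_pos, div_lt_one hx]; exact hqx
  have hs : 0 < Real.sqrt (1 - q / x) := Real.sqrt_pos.mpr hu
  have hs2 : x * Real.sqrt (1 - q / x) ^ 2 = x - q := by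
    rw [Real.sq_sqrt hu.le]; field_simp
  have harg : 0 < 2 * x * (1 + Real.sqrt (1 - q / x)) - q := by nlinarith
  have hdu : HasDerivAt (fun y => 1 - q / y) (q / x ^ 2) x := by
    have h1 : HasDerivAt (fun y : ℝ => q / y) (-(q / x ^ 2)) x := by
      simpa [div_eq_mul_inv, mul_comm, neg_div] using (hasDerivAt_inv hx.ne').const_mul q
    simpa using h1.const_sub 1
  have hds : HasDerivAt (fun y => Real.sqrt (1 - q / y)) (q / x ^ 2 / (2 * Real.sqrt (1 - q / x))) x :=
    hdu.sqrt hu.ne'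
  have hdarg : HasDerivAt (fun y => 2 * y * (1 + Real.sqrt (1 - q / y)) - q)
      (2 * (1 + Real.sqrt (1 - q / x)) + 2 * x * (q / x ^ 2 / (2 * Real.sqrt (1 - q / x)))) x := by
    have h2 : HasDerivAt (fun y : ℝ => 2 * y) 2 x := by
      simpa using (hasDerivAt_id x).const_mul 2
    simpa using (h2.mul (hds.const_add 1)).sub_const q
  have hdlog := (hdarg.log harg.ne').const_mul p
  have hd2 := (hasDerivAt_id x).mul hds
  have htot := hdlog.add hd2
  refine htot.congr_deriv ?_
  simpa using (hughes_key p q x (Real.sqrt (1 - q / x)) hq hx hs hs2 hpq harg).symm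

/-- Implicit formula for the radius in regime 1 (`0 < ρ₀ < 1/2`) of the two-dimensional radial
characteristic flow of the zero-viscosity Hughes model: a solution of
`r' = √(1 − 4 r₀ V₀ / r)`, `r(0) = r₀`, with `r ≥ r₀`, satisfies
`2 r₀ V₀ log[2r(1 + √(1 − 4r₀V₀/r)) − 4r₀V₀] + r √(1 − 4r₀V₀/r)
  = t + r₀ [2 V₀ log(4 r₀ (1−ρ₀)²) + 1 − 2ρ₀]`. -/
theorem hughes_2d_regime1_implicit_solution
    (r₀ ρ₀ T : ℝ) (hr₀ : 0 < r₀) (hρ₀ : 0 < ρ₀) (hρ₀' : ρ₀ < 1 / 2) (hT : 0 < T)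
    (V₀ : ℝ) (hV₀ : V₀ = ρ₀ * (1 - ρ₀))
    (r : ℝ → ℝ) (hr0 : r 0 = r₀)
    (hge : ∀ t ∈ Set.Icc (0:ℝ) T, r₀ ≤ r t)
    (hr' : ∀ t ∈ Set.Icc (0:ℝ) T,
      HasDerivWithinAt r (Real.sqrt (1 - 4 * r₀ * V₀ / r t)) (Set.Icc 0 T) t) :
    ∀ t ∈ Set.Icc (0:ℝ) T,
      2 * r₀ * V₀ *
          Real.log (2 * r t * (1 + Real.sqrt (1 - 4 * r₀ * V₀ / r t)) - 4 * r₀ * V₀)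
        + r t * Real.sqrt (1 - 4 * r₀ * V₀ / r t)
      = t + r₀ * (2 * V₀ * Real.log (4 * r₀ * (1 - ρ₀) ^ 2) + 1 - 2 * ρ₀) := by
  have hV : 0 < V₀ := by rw [hV₀]; nlinarith
  have hq : 0 < 4 * r₀ * V₀ := by positivity
  have hqr₀ : 4 * r₀ * V₀ < r₀ := by
    have h1 : 4 * ρ₀ * (1 - ρ₀) < 1 := by nlinarith [mul_pos (show (0:ℝ) < 1 - 2*ρ₀ by linarith) (show (0:ℝ) < 1 - 2*ρ₀ by linarith)]
    rw [hV₀]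
    nlinarith [mul_lt_mul_of_pos_left h1 hr₀]
  set f : ℝ → ℝ := fun t =>
    2 * r₀ * V₀ * Real.log (2 * r t * (1 + Real.sqrt (1 - 4 * r₀ * V₀ / r t)) - 4 * r₀ * V₀)
      + r t * Real.sqrt (1 - 4 * r₀ * V₀ / r t) - t with hf_def
  have hf : ∀ t ∈ Set.Icc (0:ℝ) T, HasDerivWithinAt f 0 (Set.Icc 0 T) t := by
    intro t ht
    have hqx : 4 * r₀ * V₀ < r t := lt_of_lt_of_le hqr₀ (hge t ht)
    have hx : 0 < r t := hq.trans hqx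
    have hu : 0 < 1 - 4 * r₀ * V₀ / r t := by rw [sub_pos, div_lt_one hx]; exact hqx
    have hs : 0 < Real.sqrt (1 - 4 * r₀ * V₀ / r t) := Real.sqrt_pos.mpr hu
    have hg := hughes_aux_deriv (2 * r₀ * V₀) (4 * r₀ * V₀) (r t) hq hqx (by ring)
    have hcomp := hg.comp_hasDerivWithinAt t (hr' t ht)
    have hone : (1 / Real.sqrt (1 - 4 * r₀ * V₀ / r t)) * Real.sqrt (1 - 4 * r₀ * V₀ / r t) = 1 :=
      one_div_mul_cancel hs.ne'
    have := hcomp.sub (hasDerivWithinAt_id t (Set.Icc 0 T))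
    rw [hone, sub_self] at this
    exact this
  have hconst : ∀ t ∈ Set.Icc (0:ℝ) T, f t = f 0 := by
    apply constant_of_has_deriv_right_zero
    · exact fun t ht => (hf t ht).continuousWithinAt
    · intro x hx
      exact (hf x (Ico_subset_Icc_self hx)).mono_of_mem_nhdsWithin (Icc_mem_nhdsGE_of_mem hx)
  intro t ht
  have hc := hconst t ht
  have hs0 : Real.sqrt (1 - 4 * r₀ * V₀ / r₀) = 1 - 2 * ρ₀ := by
    have h1 : 1 - 4 * r₀ * V₀ / r₀ = (1 - 2 * ρ₀) ^ 2 := by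
      rw [hV₀]; field_simp; ring
    rw [h1, Real.sqrt_sq (by linarith)]
  have harg0 : 2 * r₀ * (1 + (1 - 2 * ρ₀)) - 4 * r₀ * V₀ = 4 * r₀ * (1 - ρ₀) ^ 2 := by
    rw [hV₀]; ring
  simp only [hf_def] at hc
  rw [hr0, hs0, harg0] at hc
  linear_combination hc
end

section
/- Let r₀ > 0, 1/2 < ρ₀ < 1, V₀ = ρ₀(1−ρ₀), and T > 0. Let r : [0,T] → ℝ be differentiable with r(0) = r₀, 4 r₀ V₀ < r(t) ≤ r₀ for all t, and r'(t) = −√(1 − 4 r₀ V₀ / r(t)) for all t ∈ [0,T]. Then for all t ∈ [0,T]: 2 r₀ V₀ log[2 r(t) (1 + √(1 − 4 r₀ V₀ / r(t))) − 4 r₀ V₀] + r(t) √(1 − 4 r₀ V₀ / r(t)) = −t + r₀ [2 V₀ log(4 r₀ ρ₀²) + 2ρ₀ − 1]. -/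
open Set

/-- Implicit formula for the radius in regime 2 (`1/2 < ρ₀ < 1`) of the two-dimensional radial
characteristic flow of the zero-viscosity Hughes model: a solution of
`r' = −√(1 − 4 r₀ V₀ / r)`, `r(0) = r₀`, with `4 r₀ V₀ < r ≤ r₀`, satisfies
`2 r₀ V₀ log[2r(1 + √(1 − 4r₀V₀/r)) − 4r₀V₀] + r √(1 − 4r₀V₀/r)
  = −t + r₀ [2 V₀ log(4 r₀ ρ₀²) + 2ρ₀ − 1]`. -/
theorem hughes_2d_regime2_implicit_solution
    (r₀ ρ₀ T : ℝ) (hr₀ : 0 < r₀) (hρ₀ : 1 / 2 < ρ₀) (hρ₀' : ρ₀ < 1) (hT : 0 < T)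
    (V₀ : ℝ) (hV₀ : V₀ = ρ₀ * (1 - ρ₀))
    (r : ℝ → ℝ) (hr0 : r 0 = r₀)
    (hlt : ∀ t ∈ Set.Icc (0:ℝ) T, 4 * r₀ * V₀ < r t ∧ r t ≤ r₀)
    (hr' : ∀ t ∈ Set.Icc (0:ℝ) T,
      HasDerivWithinAt r (-Real.sqrt (1 - 4 * r₀ * V₀ / r t)) (Set.Icc 0 T) t) :
    ∀ t ∈ Set.Icc (0:ℝ) T,
      2 * r₀ * V₀ *
          Real.log (2 * r t * (1 + Real.sqrt (1 - 4 * r₀ * V₀ / r t)) - 4 * r₀ * V₀)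
        + r t * Real.sqrt (1 - 4 * r₀ * V₀ / r t)
      = -t + r₀ * (2 * V₀ * Real.log (4 * r₀ * ρ₀ ^ 2) + 2 * ρ₀ - 1) := by
  have hV : 0 < V₀ := by rw [hV₀]; nlinarith
  set a := 4 * r₀ * V₀ with ha
  have hapos : 0 < a := by positivity
  set g : ℝ → ℝ := fun x =>
    2 * r₀ * V₀ * Real.log (2 * x * (1 + Real.sqrt (1 - a / x)) - a)
      + x * Real.sqrt (1 - a / x) with hg_def
  have hgderiv : ∀ x : ℝ, a < x → HasDerivAt g (1 / Real.sqrt (1 - a / x)) x := by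
    intro x hx
    have hx0 : 0 < x := lt_trans hapos hx
    have hinner : 0 < 1 - a / x := by
      have : a / x < 1 := (div_lt_one hx0).mpr hx
      linarith
    have hs : 0 < Real.sqrt (1 - a / x) := Real.sqrt_pos.mpr hinner
    set s := Real.sqrt (1 - a / x) with hs_def
    have hs2 : s ^ 2 = 1 - a / x := Real.sq_sqrt hinner.le
    have hxs2 : x * s ^ 2 = x - a := by
      rw [hs2]; field_simp
    have h1 : HasDerivAt (fun y : ℝ => 1 - a / y) (a / x ^ 2) x := by
      have := ((hasDerivAt_inv hx0.ne').const_mul a).const_sub 1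
      convert this using 1
      case e'_4 => rfl
      case e'_5 => rfl
      case e'_8 => ext y; ring
      field_simp
    have h2 : HasDerivAt (fun y : ℝ => Real.sqrt (1 - a / y))
        (a / x ^ 2 / (2 * s)) x := by
      have := h1.sqrt hinner.ne'
      simpa [hs_def] using this
    have hD : 2 * x * (1 + s) - a = x * (1 + s) ^ 2 := by linear_combination -hxs2
    have hDpos : 0 < 2 * x * (1 + s) - a := by rw [hD]; positivity
    have h3 : HasDerivAt (fun y : ℝ => 2 * y * (1 + Real.sqrt (1 - a / y)) - a)
        (2 * (1 + s) + 2 * x * (a / x ^ 2 / (2 * s))) x := by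
      have hf : HasDerivAt (fun y : ℝ => 2 * y) 2 x := by
        simpa using (hasDerivAt_id x).const_mul 2
      have := (hf.mul (h2.const_add 1)).sub_const a
      convert this using 1
      case e'_4 => rfl
      case e'_5 => rfl
      case e'_8 => rfl
    have h4 : HasDerivAt (fun y : ℝ =>
        2 * r₀ * V₀ * Real.log (2 * y * (1 + Real.sqrt (1 - a / y)) - a))
        (2 * r₀ * V₀ * ((2 * (1 + s) + 2 * x * (a / x ^ 2 / (2 * s))) /
          (2 * x * (1 + s) - a))) x := by
      exact ((h3.log hDpos.ne').const_mul (2 * r₀ * V₀))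
    have h5 : HasDerivAt (fun y : ℝ => y * Real.sqrt (1 - a / y))
        (1 * s + x * (a / x ^ 2 / (2 * s))) x := (hasDerivAt_id x).mul h2
    have htot := h4.add h5
    convert htot using 1
    case e'_4 => rfl
    case e'_5 => rfl
    case e'_8 => rfl
    have h1s : (0:ℝ) < 1 + s := by linarith
    have h2rv : 2 * r₀ * V₀ = a / 2 := by rw [ha]; ring
    have haeq : a = x - x * s ^ 2 := by linarith [hxs2]
    rw [hD, h2rv, haeq]
    field_simp
    ring
  -- the combined function has zero derivative
  have hderivh : ∀ t ∈ Icc (0:ℝ) T,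
      HasDerivWithinAt (fun t => g (r t) + t) 0 (Icc 0 T) t := by
    intro t ht
    obtain ⟨h1t, _⟩ := hlt t ht
    have hrt0 : 0 < r t := lt_trans hapos h1t
    have hinner : 0 < 1 - a / r t := by
      have : a / r t < 1 := (div_lt_one hrt0).mpr h1t
      linarith
    have hs : 0 < Real.sqrt (1 - a / r t) := Real.sqrt_pos.mpr hinner
    have := ((hgderiv (r t) h1t).comp_hasDerivWithinAt t (hr' t ht)).add
      (hasDerivWithinAt_id t (Icc 0 T))
    convert this using 1
    case e'_4 => rfl
    case e'_5 => rfl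
    case e'_8 => rfl
    have hmul : 1 / Real.sqrt (1 - a / r t) * -Real.sqrt (1 - a / r t) = -1 := by
      rw [div_mul_eq_mul_div, one_mul, neg_div, div_self hs.ne']
    rw [hmul]; ring
  have hcont : ContinuousOn (fun t => g (r t) + t) (Icc 0 T) :=
    fun t ht => (hderivh t ht).continuousWithinAt
  have hconst : ∀ t ∈ Icc (0:ℝ) T, g (r t) + t = g (r 0) + 0 := by
    have := constant_of_has_deriv_right_zero hcont (fun x hx =>
      (hderivh x (Ico_subset_Icc_self hx)).mono_of_mem_nhdsWithin (Icc_mem_nhdsGE_of_mem hx))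
    intro t ht
    exact this t ht
  have hgr₀ : g r₀ = r₀ * (2 * V₀ * Real.log (4 * r₀ * ρ₀ ^ 2) + 2 * ρ₀ - 1) := by
    have ha_r : a / r₀ = 4 * V₀ := by rw [ha]; field_simp
    have hsq : 1 - a / r₀ = (2 * ρ₀ - 1) ^ 2 := by rw [ha_r, hV₀]; ring
    have hsqrt : Real.sqrt (1 - a / r₀) = 2 * ρ₀ - 1 := by
      rw [hsq, Real.sqrt_sq (by linarith)]
    have harg : 2 * r₀ * (1 + (2 * ρ₀ - 1)) - a = 4 * r₀ * ρ₀ ^ 2 := by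
      rw [ha, hV₀]; ring
    simp only [hg_def, hsqrt, harg]
    ring
  intro t ht
  have := hconst t ht
  rw [hr0, hgr₀] at this
  simp only [hg_def] at this
  linarith
end

section
/- Let r₀ > 0 and 0 < ρ₀ < 1. Define, for t ≥ 0, r(t) = √(t² + 2 r₀ (1 − 2ρ₀) t + r₀²) and ρ(t) = (1/2)[1 − (t + r₀(1 − 2ρ₀)) / r(t)]. Then r(t) > 0 for all t ≥ 0, r(0) = r₀, ρ(0) = ρ₀, and the pair (r, ρ) solves the three-dimensional characteristic system: r'(t) = 1 − 2ρ(t) and ρ'(t) = −(2/r(t)) ρ(t)(1 − ρ(t)) for all t ≥ 0. -/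
open Set

/-- The explicit functions `r(t) = √(t² + 2r₀(1−2ρ₀)t + r₀²)` and
`ρ(t) = (1/2)[1 − (t + r₀(1−2ρ₀))/r(t)]` solve the three-dimensional characteristic system
`r' = 1 − 2ρ`, `ρ' = −(2/r) ρ(1−ρ)` of the zero-viscosity radial Hughes model, with
`r(0) = r₀`, `ρ(0) = ρ₀` and `r > 0`. -/
theorem hughes_3d_explicit_solution
    (r₀ ρ₀ : ℝ) (hr₀ : 0 < r₀) (hρ₀ : 0 < ρ₀) (hρ₀' : ρ₀ < 1)
    (r ρ : ℝ → ℝ)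
    (hr : ∀ t, r t = Real.sqrt (t ^ 2 + 2 * r₀ * (1 - 2 * ρ₀) * t + r₀ ^ 2))
    (hρ : ∀ t, ρ t = (1 - (t + r₀ * (1 - 2 * ρ₀)) / r t) / 2) :
    (∀ t ≥ (0:ℝ), 0 < r t) ∧ r 0 = r₀ ∧ ρ 0 = ρ₀ ∧
    (∀ t ≥ (0:ℝ), HasDerivAt r (1 - 2 * ρ t) t) ∧
    (∀ t ≥ (0:ℝ), HasDerivAt ρ (-(2 / r t) * (ρ t * (1 - ρ t))) t) := by
  have hQpos : ∀ t : ℝ, 0 < t ^ 2 + 2 * r₀ * (1 - 2 * ρ₀) * t + r₀ ^ 2 := by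
    intro t
    nlinarith [sq_nonneg (t + r₀ * (1 - 2 * ρ₀)),
      mul_pos (mul_pos (pow_pos hr₀ 2) hρ₀) (sub_pos.mpr hρ₀')]
  have hrpos : ∀ t : ℝ, 0 < r t := by
    intro t; rw [hr t]; exact Real.sqrt_pos.mpr (hQpos t)
  have hr0 : r 0 = r₀ := by
    rw [hr 0]
    have : (0:ℝ) ^ 2 + 2 * r₀ * (1 - 2 * ρ₀) * 0 + r₀ ^ 2 = r₀ ^ 2 := by ring
    rw [this, Real.sqrt_sq hr₀.le]
  have hρ0 : ρ 0 = ρ₀ := by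
    rw [hρ 0, hr0]
    field_simp
    ring
  have hrderiv : ∀ t : ℝ, HasDerivAt r ((t + r₀ * (1 - 2 * ρ₀)) / r t) t := by
    intro t
    have h1 : HasDerivAt (fun s : ℝ => s ^ 2 + 2 * r₀ * (1 - 2 * ρ₀) * s + r₀ ^ 2)
        (2 * t + 2 * r₀ * (1 - 2 * ρ₀)) t := by
      have := ((hasDerivAt_pow 2 t).add
        ((hasDerivAt_id t).const_mul (2 * r₀ * (1 - 2 * ρ₀)))).add_const (r₀ ^ 2)
      exact this.congr_deriv (by norm_num)
    have h2 := h1.sqrt (ne_of_gt (hQpos t))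
    have hfun : r = fun s => Real.sqrt (s ^ 2 + 2 * r₀ * (1 - 2 * ρ₀) * s + r₀ ^ 2) :=
      funext hr
    have hne : Real.sqrt (t ^ 2 + 2 * r₀ * (1 - 2 * ρ₀) * t + r₀ ^ 2) ≠ 0 :=
      (Real.sqrt_pos.mpr (hQpos t)).ne'
    rw [hfun]
    convert h2 using 1
    field_simp [hne]
  have hρval : ∀ t : ℝ, 1 - 2 * ρ t = (t + r₀ * (1 - 2 * ρ₀)) / r t := by
    intro t; rw [hρ t]; ring
  refine ⟨fun t _ => hrpos t, hr0, hρ0, fun t _ => ?_, fun t _ => ?_⟩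
  · rw [hρval t]
    exact hrderiv t
  · have hq : HasDerivAt (fun s : ℝ => (s + r₀ * (1 - 2 * ρ₀)) / r s)
        ((1 * r t - (t + r₀ * (1 - 2 * ρ₀)) *
          ((t + r₀ * (1 - 2 * ρ₀)) / r t)) / (r t) ^ 2) t :=
      ((hasDerivAt_id t).add_const (r₀ * (1 - 2 * ρ₀))).div (hrderiv t) (hrpos t).ne'
    have h3 := (hq.const_sub 1).div_const 2
    have hfun : ρ = fun s => (1 - (s + r₀ * (1 - 2 * ρ₀)) / r s) / 2 := funext hρ
    rw [hfun]
    refine h3.congr_deriv ?_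
    simp only
    have hR := (hrpos t).ne'
    field_simp
    ring
end
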